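/- arXiv:1707.06848 — 2 statements merged into one kernel-verified Lean document; each statement's English description precedes it below -/
import Mathlib

section
/- On the domain A where the triangle inequalities hold for (e^{x₁}, e^{x₂}, e^{x₃}), the partial derivative of the function f(x₁,x₂,x₃) = Σ α_i x_i + Σ Л(α_i) with respect to x_i equals α_i, the angle opposite the side of length e^{x_i} in the triangle with side lengths e^{x₁}, e^{x₂}, e^{x₃}. -/
open Real

/-- Milnor's Lobachevsky function Л(α) = −∫₀^α log|2 sin t| dt. -/
noncomputable def Lob (α : ℝ) : ℝ := -∫ t in (0:ℝ)..α, Real.log (2 * Real.sin t)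

/-- The domain A where the triangle inequalities hold for (e^{x₁}, e^{x₂}, e^{x₃}). -/
def triA : Set (ℝ × ℝ × ℝ) :=
  {x | Real.exp x.1 < Real.exp x.2.1 + Real.exp x.2.2 ∧
       Real.exp x.2.1 < Real.exp x.2.2 + Real.exp x.1 ∧
       Real.exp x.2.2 < Real.exp x.1 + Real.exp x.2.1}

/-- The angle opposite the side of length e^{x₁} (law of cosines). -/
noncomputable def ang1 (x : ℝ × ℝ × ℝ) : ℝ :=
  Real.arccos ((Real.exp (2*x.2.1) + Real.exp (2*x.2.2) - Real.exp (2*x.1)) /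
    (2 * Real.exp x.2.1 * Real.exp x.2.2))

/-- The angle opposite the side of length e^{x₂}. -/
noncomputable def ang2 (x : ℝ × ℝ × ℝ) : ℝ :=
  Real.arccos ((Real.exp (2*x.2.2) + Real.exp (2*x.1) - Real.exp (2*x.2.1)) /
    (2 * Real.exp x.2.2 * Real.exp x.1))

/-- The angle opposite the side of length e^{x₃}. -/
noncomputable def ang3 (x : ℝ × ℝ × ℝ) : ℝ :=
  Real.arccos ((Real.exp (2*x.1) + Real.exp (2*x.2.1) - Real.exp (2*x.2.2)) /
    (2 * Real.exp x.1 * Real.exp x.2.1))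

/-- The triangle function f(x₁,x₂,x₃) = Σ αᵢxᵢ + Σ Л(αᵢ). -/
noncomputable def fTri (x : ℝ × ℝ × ℝ) : ℝ :=
  ang1 x * x.1 + ang2 x * x.2.1 + ang3 x * x.2.2 +
    Lob (ang1 x) + Lob (ang2 x) + Lob (ang3 x)

/-!
With `aⱼ = e^{xⱼ}` and `Л' α = -log (2 sin α)`, the chain rule gives
`∂f/∂x₁ = α₁ + Σⱼ (∂αⱼ/∂x₁) (xⱼ - log (2 sin αⱼ))`. By the law of sines `aⱼ / (2 sin αⱼ)` is the
circumradius `R` for every `j`, so each bracket equals `log R`, and the remaining sum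
`log R · ∂(α₁ + α₂ + α₃)/∂x₁` vanishes because the angles add up to `π`.
The other two partial derivatives follow from the cyclic symmetry of `f`.
-/

open Filter Topology

lemma intervalIntegrable_log_two_mul_sin (a b : ℝ) :
    IntervalIntegrable (fun t => log (2 * sin t)) MeasureTheory.volume a b :=
  (analyticOnNhd_const.mul analyticOnNhd_sin).meromorphicOn.intervalIntegrable_log

lemma hasDerivAt_Lob {α : ℝ} (hα : sin α ≠ 0) : HasDerivAt Lob (-log (2 * sin α)) α := by
  have hcont : ContinuousAt (fun t => log (2 * sin t)) α :=
    (continuous_const.mul continuous_sin).continuousAt.log (mul_ne_zero two_ne_zero hα)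
  have hmeas : Measurable fun t => log (2 * sin t) := by fun_prop
  exact (intervalIntegral.integral_hasDerivAt_right (intervalIntegrable_log_two_mul_sin 0 α)
    hmeas.stronglyMeasurable.stronglyMeasurableAtFilter hcont).neg

def TriangleIneq (a b c : ℝ) : Prop := a < b + c ∧ b < c + a ∧ c < a + b

/-- The angle opposite the side `a`. -/
noncomputable def triAngle (a b c : ℝ) : ℝ := arccos ((b ^ 2 + c ^ 2 - a ^ 2) / (2 * b * c))

namespace TriangleIneq

variable {a b c : ℝ}

lemma rotate (h : TriangleIneq a b c) : TriangleIneq b c a := ⟨h.2.1, h.2.2, h.1⟩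

lemma pos_left (h : TriangleIneq a b c) : 0 < a := by
  obtain ⟨h₁, h₂, h₃⟩ := h
  linarith

lemma neg_one_lt_cos (h : TriangleIneq a b c) : -1 < (b ^ 2 + c ^ 2 - a ^ 2) / (2 * b * c) := by
  have hb := h.rotate.pos_left
  have hc := h.rotate.rotate.pos_left
  rw [lt_div_iff₀ (by positivity)]
  nlinarith [mul_pos (sub_pos.2 h.1) (add_pos h.pos_left (add_pos hb hc))]

lemma cos_lt_one (h : TriangleIneq a b c) : (b ^ 2 + c ^ 2 - a ^ 2) / (2 * b * c) < 1 := by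
  have hb := h.rotate.pos_left
  have hc := h.rotate.rotate.pos_left
  rw [div_lt_one (by positivity)]
  nlinarith [h.2.1, h.2.2]

lemma triAngle_pos (h : TriangleIneq a b c) : 0 < triAngle a b c :=
  Real.arccos_pos.2 h.cos_lt_one

lemma triAngle_lt_pi (h : TriangleIneq a b c) : triAngle a b c < π :=
  Real.arccos_lt_pi.2 h.neg_one_lt_cos

lemma sin_triAngle_pos (h : TriangleIneq a b c) : 0 < sin (triAngle a b c) :=
  Real.sin_pos_of_pos_of_lt_pi h.triAngle_pos h.triAngle_lt_pi

lemma heron_pos (h : TriangleIneq a b c) :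
    0 < (a + b + c) * (b + c - a) * (c + a - b) * (a + b - c) := by
  obtain ⟨h₁, h₂, h₃⟩ := h
  exact mul_pos (mul_pos (mul_pos (by linarith) (by linarith)) (by linarith)) (by linarith)

lemma two_mul_mul_sin_triAngle (h : TriangleIneq a b c) :
    2 * b * c * sin (triAngle a b c) =
      √((a + b + c) * (b + c - a) * (c + a - b) * (a + b - c)) := by
  have hb := h.rotate.pos_left
  have hc := h.rotate.rotate.pos_left
  have hsq : (2 * b * c) ^ 2 * (1 - ((b ^ 2 + c ^ 2 - a ^ 2) / (2 * b * c)) ^ 2) =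
      (a + b + c) * (b + c - a) * (c + a - b) * (a + b - c) := by
    field_simp
    ring
  rw [triAngle, Real.sin_arccos, ← hsq, Real.sqrt_mul (sq_nonneg _),
    Real.sqrt_sq (by positivity)]

lemma sin_triAngle_div_eq (h : TriangleIneq a b c) :
    sin (triAngle b c a) / b = sin (triAngle a b c) / a := by
  have ha := h.pos_left
  have hb := h.rotate.pos_left
  have hc := h.rotate.rotate.pos_left
  have hA := h.two_mul_mul_sin_triAngle
  have hB := h.rotate.two_mul_mul_sin_triAngle
  rw [show (b + c + a) * (c + a - b) * (a + b - c) * (b + c - a) =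
    (a + b + c) * (b + c - a) * (c + a - b) * (a + b - c) by ring, ← hA] at hB
  rw [div_eq_div_iff hb.ne' ha.ne']
  apply mul_left_cancel₀ (by positivity : (2 * b * c : ℝ) ≠ 0)
  linear_combination b * hB

lemma log_two_mul_sin_triAngle_sub_log (h : TriangleIneq a b c) :
    log (2 * sin (triAngle b c a)) - log b = log (2 * sin (triAngle a b c)) - log a := by
  rw [← Real.log_div (mul_pos two_pos h.rotate.sin_triAngle_pos).ne' h.rotate.pos_left.ne',
    ← Real.log_div (mul_pos two_pos h.sin_triAngle_pos).ne' h.pos_left.ne', mul_div_assoc,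
    mul_div_assoc, h.sin_triAngle_div_eq]

lemma triAngle_add_triAngle_add_triAngle (h : TriangleIneq a b c) :
    triAngle a b c + triAngle b c a + triAngle c a b = π := by
  have ha := h.pos_left
  have hb := h.rotate.pos_left
  have hc := h.rotate.rotate.pos_left
  have ⟨h₁, h₂, h₃⟩ := h
  have hcos_α : cos (triAngle a b c) = (b ^ 2 + c ^ 2 - a ^ 2) / (2 * b * c) :=
    Real.cos_arccos h.neg_one_lt_cos.le h.cos_lt_one.le
  have hcos_β : cos (triAngle b c a) = (c ^ 2 + a ^ 2 - b ^ 2) / (2 * c * a) :=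
    Real.cos_arccos h.rotate.neg_one_lt_cos.le h.rotate.cos_lt_one.le
  -- `α < π - β = arccos (-cos β)` amounts to `cos α + cos β > 0`
  have hsum_lt : triAngle a b c + triAngle b c a < π := by
    have hpos :
        0 < (b ^ 2 + c ^ 2 - a ^ 2) / (2 * b * c) + (c ^ 2 + a ^ 2 - b ^ 2) / (2 * c * a) := by
      rw [show (b ^ 2 + c ^ 2 - a ^ 2) / (2 * b * c) + (c ^ 2 + a ^ 2 - b ^ 2) / (2 * c * a) =
        (a + b) * (c - a + b) * (c + a - b) / (2 * a * b * c) by field_simp; ring]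
      exact div_pos (mul_pos (mul_pos (by linarith) (by linarith)) (by linarith)) (by positivity)
    have := Real.arccos_lt_arccos (x := -((c ^ 2 + a ^ 2 - b ^ 2) / (2 * c * a)))
      (by linarith [h.rotate.cos_lt_one]) (by linarith) h.cos_lt_one.le
    rw [Real.arccos_neg] at this
    unfold triAngle
    linarith
  have hcos : cos (triAngle a b c + triAngle b c a) = -((a ^ 2 + b ^ 2 - c ^ 2) / (2 * a * b)) := by
    have hsin : sin (triAngle a b c) * sin (triAngle b c a) =
        (a + b + c) * (b + c - a) * (c + a - b) * (a + b - c) / (4 * a * b * c ^ 2) := by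
      have hprod :=
        congrArg₂ (· * ·) h.two_mul_mul_sin_triAngle h.rotate.two_mul_mul_sin_triAngle
      rw [show (b + c + a) * (c + a - b) * (a + b - c) * (b + c - a) =
        (a + b + c) * (b + c - a) * (c + a - b) * (a + b - c) by ring,
        Real.mul_self_sqrt h.heron_pos.le] at hprod
      field_simp
      linear_combination hprod
    rw [Real.cos_add, hcos_α, hcos_β, hsin]
    field_simp
    ring
  have := Real.arccos_cos (add_pos h.triAngle_pos h.rotate.triAngle_pos).le hsum_lt.le
  rw [hcos, Real.arccos_neg] at this
  unfold triAngle at this ⊢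
  linarith

lemma eventually_nhds {a b c : ℝ → ℝ} {t : ℝ} (ha : ContinuousAt a t) (hb : ContinuousAt b t)
    (hc : ContinuousAt c t) (h : TriangleIneq (a t) (b t) (c t)) :
    ∀ᶠ s in 𝓝 t, TriangleIneq (a s) (b s) (c s) :=
  (ha.eventually_lt (hb.add hc) h.1).and
    ((hb.eventually_lt (hc.add ha) h.2.1).and (hc.eventually_lt (ha.add hb) h.2.2))

lemma differentiableAt_triAngle {a b c : ℝ → ℝ} {t : ℝ}
    (ha : DifferentiableAt ℝ a t) (hb : DifferentiableAt ℝ b t) (hc : DifferentiableAt ℝ c t)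
    (h : TriangleIneq (a t) (b t) (c t)) :
    DifferentiableAt ℝ (fun s => triAngle (a s) (b s) (c s)) t := by
  have hbc : 2 * b t * c t ≠ 0 := by
    have := h.rotate.pos_left
    have := h.rotate.rotate.pos_left
    positivity
  exact (Real.differentiableAt_arccos.2 ⟨h.neg_one_lt_cos.ne', h.cos_lt_one.ne⟩).comp t
    (((hb.pow 2).add (hc.pow 2)).sub (ha.pow 2) |>.div ((hb.const_mul 2).mul hc) hbc)

end TriangleIneq

lemma hasDerivAt_angles_mul_add_Lob {α₁ α₂ α₃ : ℝ → ℝ} {t₀ y₂ y₃ k : ℝ}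
    (h₁ : DifferentiableAt ℝ α₁ t₀) (h₂ : DifferentiableAt ℝ α₂ t₀)
    (h₃ : DifferentiableAt ℝ α₃ t₀) (hsum : ∀ᶠ t in 𝓝 t₀, α₁ t + α₂ t + α₃ t = k)
    (hs₁ : sin (α₁ t₀) ≠ 0) (hs₂ : sin (α₂ t₀) ≠ 0) (hs₃ : sin (α₃ t₀) ≠ 0)
    (hlog₂ : log (2 * sin (α₂ t₀)) - y₂ = log (2 * sin (α₁ t₀)) - t₀)
    (hlog₃ : log (2 * sin (α₃ t₀)) - y₃ = log (2 * sin (α₁ t₀)) - t₀) :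
    HasDerivAt (fun t => α₁ t * t + α₂ t * y₂ + α₃ t * y₃ +
      Lob (α₁ t) + Lob (α₂ t) + Lob (α₃ t)) (α₁ t₀) t₀ := by
  have hderiv_sum : deriv α₁ t₀ + deriv α₂ t₀ + deriv α₃ t₀ = 0 :=
    ((h₁.hasDerivAt.add h₂.hasDerivAt).add h₃.hasDerivAt).unique
      ((hasDerivAt_const t₀ k).congr_of_eventuallyEq hsum)
  refine (((((h₁.hasDerivAt.mul (hasDerivAt_id' t₀)).add (h₂.hasDerivAt.mul_const y₂)).add
    (h₃.hasDerivAt.mul_const y₃)).add ((hasDerivAt_Lob hs₁).comp t₀ h₁.hasDerivAt)).add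
    ((hasDerivAt_Lob hs₂).comp t₀ h₂.hasDerivAt)).add
    ((hasDerivAt_Lob hs₃).comp t₀ h₃.hasDerivAt) |>.congr_deriv ?_
  linear_combination (t₀ - log (2 * sin (α₁ t₀))) * hderiv_sum -
    (deriv α₂ t₀ : ℝ) * hlog₂ - (deriv α₃ t₀ : ℝ) * hlog₃
lemma ang1_eq (x : ℝ × ℝ × ℝ) : ang1 x = triAngle (exp x.1) (exp x.2.1) (exp x.2.2) := by
  simp only [ang1, triAngle, ← Real.exp_nat_mul]
  norm_num

lemma ang2_eq (x : ℝ × ℝ × ℝ) : ang2 x = triAngle (exp x.2.1) (exp x.2.2) (exp x.1) := by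
  simp only [ang2, triAngle, ← Real.exp_nat_mul]
  norm_num

lemma ang3_eq (x : ℝ × ℝ × ℝ) : ang3 x = triAngle (exp x.2.2) (exp x.1) (exp x.2.1) := by
  simp only [ang3, triAngle, ← Real.exp_nat_mul]
  norm_num

lemma fTri_rotate (p q r : ℝ) : fTri (p, q, r) = fTri (q, r, p) := by
  simp only [fTri, ang1, ang2, ang3]
  ring

lemma hasDerivAt_fTri_fst {p q r : ℝ} (h : TriangleIneq (exp p) (exp q) (exp r)) :
    HasDerivAt (fun t => fTri (t, q, r)) (ang1 (p, q, r)) p := by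
  simp only [fTri, ang1_eq, ang2_eq, ang3_eq]
  have hnear : ∀ᶠ t in 𝓝 p, TriangleIneq (exp t) (exp q) (exp r) :=
    h.eventually_nhds Real.continuous_exp.continuousAt continuousAt_const continuousAt_const
  refine hasDerivAt_angles_mul_add_Lob (k := π)
    (h.differentiableAt_triAngle differentiableAt_exp (differentiableAt_const _)
      (differentiableAt_const _))
    (h.rotate.differentiableAt_triAngle (differentiableAt_const _) (differentiableAt_const _)
      differentiableAt_exp)
    (h.rotate.rotate.differentiableAt_triAngle (differentiableAt_const _) differentiableAt_exp
      (differentiableAt_const _))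
    (hnear.mono fun t ht => ht.triAngle_add_triAngle_add_triAngle)
    h.sin_triAngle_pos.ne' h.rotate.sin_triAngle_pos.ne' h.rotate.rotate.sin_triAngle_pos.ne'
    ?_ ?_
  · simpa only [Real.log_exp] using h.log_two_mul_sin_triAngle_sub_log
  · simpa only [Real.log_exp] using
      h.rotate.log_two_mul_sin_triAngle_sub_log.trans h.log_two_mul_sin_triAngle_sub_log

/-- Equation (6.5): the partial derivatives of f are the triangle angles. -/
theorem fTri_partial_deriv (x : ℝ × ℝ × ℝ) (hx : x ∈ triA) :
    HasDerivAt (fun t => fTri (t, x.2.1, x.2.2)) (ang1 x) x.1 ∧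
    HasDerivAt (fun t => fTri (x.1, t, x.2.2)) (ang2 x) x.2.1 ∧
    HasDerivAt (fun t => fTri (x.1, x.2.1, t)) (ang3 x) x.2.2 := by
  obtain ⟨p, q, r⟩ := x
  have h : TriangleIneq (exp p) (exp q) (exp r) := hx
  refine ⟨hasDerivAt_fTri_fst h, ?_, ?_⟩
  · have hrot : (fun t => fTri (p, t, r)) = fun t => fTri (t, r, p) :=
      funext fun t => fTri_rotate p t r
    exact hrot ▸ hasDerivAt_fTri_fst h.rotate
  · have hrot : (fun t => fTri (p, q, t)) = fun t => fTri (t, p, q) :=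
      funext fun t => (fTri_rotate p q t).trans (fTri_rotate q t p)
    exact hrot ▸ hasDerivAt_fTri_fst h.rotate.rotate
end

section
/- The second derivative of f at a point x ∈ A is the quadratic form D²f|_x = cot α₁ (dx₂−dx₃)² + cot α₂ (dx₃−dx₁)² + cot α₃ (dx₁−dx₂)², and this quadratic form is positive semidefinite with kernel exactly the span of (1,1,1), provided all angles α_i lie in (0,π) and sum to π. -/
private lemma quad_aux (c₁ c₂ c₃ a b : ℝ) (hSpos : 0 < c₁ + c₃)
    (key : (c₁ + c₃) * (c₂ + c₃) = c₃ ^ 2 + 1) :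
    0 ≤ c₁ * a ^ 2 + c₂ * b ^ 2 + c₃ * (a + b) ^ 2 ∧
    (c₁ * a ^ 2 + c₂ * b ^ 2 + c₃ * (a + b) ^ 2 = 0 ↔ a = 0 ∧ b = 0) := by
  have main : (c₁ + c₃) * (c₁ * a ^ 2 + c₂ * b ^ 2 + c₃ * (a + b) ^ 2)
      = ((c₁ + c₃) * a + c₃ * b) ^ 2 + b ^ 2 := by
    linear_combination b ^ 2 * key
  have hq_eq : c₁ * a ^ 2 + c₂ * b ^ 2 + c₃ * (a + b) ^ 2
      = (((c₁ + c₃) * a + c₃ * b) ^ 2 + b ^ 2) / (c₁ + c₃) := by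
    rw [eq_div_iff (ne_of_gt hSpos), ← main]; ring
  constructor
  · rw [hq_eq]; positivity
  · rw [hq_eq, div_eq_zero_iff]
    constructor
    · intro hq
      rcases hq with hq | hq
      · have hb : b = 0 := by
          nlinarith [sq_nonneg ((c₁ + c₃) * a + c₃ * b), sq_nonneg b]
        have h0 : ((c₁ + c₃) * a + c₃ * b) ^ 2 = 0 := by nlinarith [sq_nonneg b]
        have ha : (c₁ + c₃) * a = 0 := by
          have := pow_eq_zero_iff (n := 2) (by norm_num) |>.mp h0
          rw [hb] at this; linarith
        refine ⟨?_, hb⟩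
        rcases mul_eq_zero.mp ha with h | h
        · exact absurd h (ne_of_gt hSpos)
        · exact h
      · exact absurd hq (ne_of_gt hSpos)
    · rintro ⟨ha, hb⟩
      left; rw [ha, hb]; ring

/-- The quadratic form q(v) = cot α₁(v₂−v₃)² + cot α₂(v₃−v₁)² + cot α₃(v₁−v₂)²
is positive semidefinite with kernel the span of (1,1,1), for triangle angles
α₁, α₂, α₃ ∈ (0,π) with α₁+α₂+α₃ = π (Proposition 6.2 (iii),(iv)). -/
theorem quadratic_form_psd (α₁ α₂ α₃ : ℝ)
    (h₁ : α₁ ∈ Set.Ioo 0 Real.pi) (h₂ : α₂ ∈ Set.Ioo 0 Real.pi)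
    (h₃ : α₃ ∈ Set.Ioo 0 Real.pi) (hsum : α₁ + α₂ + α₃ = Real.pi)
    (v₁ v₂ v₃ : ℝ) :
    0 ≤ Real.cot α₁ * (v₂ - v₃)^2 + Real.cot α₂ * (v₃ - v₁)^2
        + Real.cot α₃ * (v₁ - v₂)^2 ∧
    (Real.cot α₁ * (v₂ - v₃)^2 + Real.cot α₂ * (v₃ - v₁)^2
        + Real.cot α₃ * (v₁ - v₂)^2 = 0 ↔ v₁ = v₂ ∧ v₂ = v₃) := by
  have hs₁ : 0 < Real.sin α₁ := Real.sin_pos_of_pos_of_lt_pi h₁.1 h₁.2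
  have hs₂ : 0 < Real.sin α₂ := Real.sin_pos_of_pos_of_lt_pi h₂.1 h₂.2
  have hs₃ : 0 < Real.sin α₃ := Real.sin_pos_of_pos_of_lt_pi h₃.1 h₃.2
  have hc₁ : Real.cot α₁ = Real.cos α₁ / Real.sin α₁ := Real.cot_eq_cos_div_sin α₁
  have hc₂ : Real.cot α₂ = Real.cos α₂ / Real.sin α₂ := Real.cot_eq_cos_div_sin α₂
  have hc₃ : Real.cot α₃ = Real.cos α₃ / Real.sin α₃ := Real.cot_eq_cos_div_sin α₃
  have hsin2 : Real.sin α₂ = Real.sin α₁ * Real.cos α₃ + Real.cos α₁ * Real.sin α₃ := by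
    have h : α₂ = Real.pi - (α₁ + α₃) := by linarith
    rw [h, Real.sin_pi_sub, Real.sin_add]
  have hsin1 : Real.sin α₁ = Real.sin α₂ * Real.cos α₃ + Real.cos α₂ * Real.sin α₃ := by
    have h : α₁ = Real.pi - (α₂ + α₃) := by linarith
    rw [h, Real.sin_pi_sub, Real.sin_add]
  have hS : Real.cot α₁ + Real.cot α₃ = Real.sin α₂ / (Real.sin α₁ * Real.sin α₃) := by
    rw [hc₁, hc₃, hsin2]; field_simp; ring
  have hT : Real.cot α₂ + Real.cot α₃ = Real.sin α₁ / (Real.sin α₂ * Real.sin α₃) := by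
    rw [hc₂, hc₃, hsin1]; field_simp; ring
  have hSpos : 0 < Real.cot α₁ + Real.cot α₃ := by rw [hS]; positivity
  have key : (Real.cot α₁ + Real.cot α₃) * (Real.cot α₂ + Real.cot α₃)
      = Real.cot α₃ ^ 2 + 1 := by
    rw [hS, hT, hc₃]
    have h := Real.sin_sq_add_cos_sq α₃
    field_simp
    nlinarith [h]
  obtain ⟨hpos, hiff⟩ := quad_aux (Real.cot α₁) (Real.cot α₂) (Real.cot α₃)
    (v₂ - v₃) (v₃ - v₁) hSpos key
  have hrw : (v₂ - v₃) + (v₃ - v₁) = -(v₁ - v₂) := by ring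
  rw [hrw, neg_sq] at hpos hiff
  refine ⟨hpos, ?_⟩
  rw [hiff]
  constructor
  · rintro ⟨ha, hb⟩
    constructor <;> linarith [sub_eq_zero.mp ha, sub_eq_zero.mp hb]
  · rintro ⟨e₁, e₂⟩
    constructor <;> [linarith; linarith]
end
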